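/- arXiv:2105.10143 — 4 statements merged into one kernel-verified Lean document; each statement's English description precedes it below -/
import Mathlib

section
/- Let 𝔸 and 𝔹 be small categories with finite products and L ⊣ F : 𝔸 → 𝔹 a reflection such that L preserves finite products. Then the essential image of the fully faithful functor L* : [𝔸ᵒᵖ, Set] → [𝔹ᵒᵖ, Set] is an exponential ideal in the presheaf category [𝔹ᵒᵖ, Set]: for every presheaf X on 𝔹 and every presheaf P in the essential image of L*, the exponential P^X again lies in the essential image of L*. -/
open CategoryTheory Limits

universe u

section SiftedColim

variable {I : Type u} [SmallCategory I]

variable [IsSifted I]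

noncomputable instance siftedColimPreservesBinaryProducts :
    PreservesLimitsOfShape (Discrete WalkingPair) (colim : (I ⥤ Type u) ⥤ Type u) :=
  IsSifted.colim_preservesBinaryProducts_of_isSifted

end SiftedColim

section Reflection

variable {𝔸 𝔹 : Type u} [SmallCategory 𝔸] [SmallCategory 𝔹]
    [HasFiniteProducts 𝔸] [HasFiniteProducts 𝔹]
    (L : 𝔹 ⥤ 𝔸) (F : 𝔸 ⥤ 𝔹) (adj : L ⊣ F) [F.Full] [F.Faithful]
    [PreservesFiniteProducts L]

include adj in
theorem costructuredArrowSifted (K : 𝔸ᵒᵖ) :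
    IsSifted (CostructuredArrow L.op K) := by
  haveI : PreservesLimitsOfShape (Discrete WalkingPair)ᵒᵖ L :=
    preservesLimitsOfShape_of_equiv (Discrete.opposite WalkingPair).symm L
  haveI : PreservesColimitsOfShape (Discrete WalkingPair) L.op :=
    preservesColimitsOfShape_op _ _
  haveI : HasBinaryCoproducts 𝔸ᵒᵖ := inferInstance
  haveI : HasBinaryCoproducts (CostructuredArrow L.op K) :=
    inferInstance
  haveI : IsIso (adj.counit.app K.unop) := inferInstance
  haveI : _root_.Nonempty (CostructuredArrow L.op K) :=
    ⟨CostructuredArrow.mk (Y := Opposite.op (F.obj K.unop))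
      (inv (adj.counit.app K.unop)).op⟩
  exact IsSifted.isSifted_of_hasBinaryCoproducts_and_nonempty

noncomputable def lanPreservesBinaryProducts :
    PreservesLimitsOfShape (Discrete WalkingPair)
      (L.op.lan : (𝔹ᵒᵖ ⥤ Type u) ⥤ 𝔸ᵒᵖ ⥤ Type u) := by
  apply preservesLimitsOfShape_of_evaluation
  intro K
  haveI := costructuredArrowSifted L F adj K
  exact preservesLimitsOfShape_of_natIso (lanEvaluationIsoColim _ _ _).symm

end Reflection

/-- For a reflection `L ⊣ F : 𝔸 → 𝔹` between small categories with finite products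
such that `L` preserves finite products, the (fully faithful) precomposition functor
`L* : [𝔸ᵒᵖ, Set] → [𝔹ᵒᵖ, Set]` exhibits its essential image as an exponential ideal
of the presheaf category `[𝔹ᵒᵖ, Set]`. -/
theorem stmt4 {𝔸 𝔹 : Type u} [SmallCategory 𝔸] [SmallCategory 𝔹]
    [HasFiniteProducts 𝔸] [HasFiniteProducts 𝔹]
    (L : 𝔹 ⥤ 𝔸) (F : 𝔸 ⥤ 𝔹) (adj : L ⊣ F) [F.Full] [F.Faithful]
    [PreservesFiniteProducts L] :
    ExponentialIdeal ((Functor.whiskeringLeft 𝔹ᵒᵖ 𝔸ᵒᵖ (Type u)).obj L.op) := by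
  haveI := adj.isLocalization
  letI : Reflective ((Functor.whiskeringLeft 𝔹ᵒᵖ 𝔸ᵒᵖ (Type u)).obj L.op) :=
    { toFull := Localization.full_whiskeringLeft L.op
        ((MorphismProperty.isomorphisms 𝔸).inverseImage L).op _
      toFaithful := Localization.faithful_whiskeringLeft L.op
        ((MorphismProperty.isomorphisms 𝔸).inverseImage L).op _
      L := L.op.lan
      adj := L.op.lanAdjunction (Type u) }
  haveI : PreservesLimitsOfShape (Discrete WalkingPair)
      (reflector ((Functor.whiskeringLeft 𝔹ᵒᵖ 𝔸ᵒᵖ (Type u)).obj L.op)) :=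
    lanPreservesBinaryProducts L F adj
  infer_instance
end

section
/- Let 𝔸 and 𝔹 be small finitely complete categories and L ⊣ F : 𝔸 → 𝔹 a reflection. If the adjunction L_! ⊣ L* between the presheaf categories [𝔹ᵒᵖ, Set] and [𝔸ᵒᵖ, Set] is stably Frobenius, then the reflection L ⊣ F is semi-left-exact, i.e. L preserves pullbacks along morphisms in the image of F. -/
open CategoryTheory Limits

universe v u v' u'

/-- An adjunction `Λ ⊣ Φ` is *stably Frobenius* when for every pullback square in the
domain of `Λ` whose cospan legs are `a : A ⟶ Φ I` and `Φ u : Φ J ⟶ Φ I`,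
the transposed square (with sides `Λ f`, the adjuncts `b̂ : Λ B ⟶ J`, `â : Λ A ⟶ I`,
and `u : J ⟶ I`) is again a pullback. -/
def StablyFrobenius {𝒜 : Type u} {ℬ : Type u'} [Category.{v} 𝒜] [Category.{v'} ℬ]
    {Lam : ℬ ⥤ 𝒜} {Phi : 𝒜 ⥤ ℬ} (adj : Lam ⊣ Phi) : Prop :=
  ∀ {B A : ℬ} {J I : 𝒜} (f : B ⟶ A) (b : B ⟶ Phi.obj J) (a : A ⟶ Phi.obj I) (u : J ⟶ I),
    IsPullback f b a (Phi.map u) →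
    IsPullback (Lam.map f) ((adj.homEquiv B J).symm b) ((adj.homEquiv A I).symm a) u

namespace Stmt5Aux

open Opposite

variable {𝔸 𝔹 : Type u} [SmallCategory 𝔸] [SmallCategory 𝔹]

/-- The canonical iso `y(F J) ≅ L*(y J)` coming from the adjunction `L ⊣ F`. -/
def theta (L : 𝔹 ⥤ 𝔸) (F : 𝔸 ⥤ 𝔹) (adj : L ⊣ F) (J : 𝔸) :
    yoneda.obj (F.obj J) ≅
      ((Functor.whiskeringLeft 𝔹ᵒᵖ 𝔸ᵒᵖ (Type u)).obj L.op).obj (yoneda.obj J) :=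
  NatIso.ofComponents (fun C => Equiv.toIso ((adj.homEquiv C.unop J).symm)) (by
    intro C C' g
    ext f
    simp [Adjunction.homEquiv_counit])

@[simp] lemma theta_hom_app (L : 𝔹 ⥤ 𝔸) (F : 𝔸 ⥤ 𝔹) (adj : L ⊣ F) (J : 𝔸)
    (C : 𝔹ᵒᵖ) (f : C.unop ⟶ F.obj J) :
    (theta L F adj J).hom.app C f = (adj.homEquiv C.unop J).symm f := rfl

/-- The canonical map `y B ⟶ L*(y (L B))` whose components are `L.map`. -/
def eta (L : 𝔹 ⥤ 𝔸) (B : 𝔹) :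
    yoneda.obj B ⟶ ((Functor.whiskeringLeft 𝔹ᵒᵖ 𝔸ᵒᵖ (Type u)).obj L.op).obj
      (yoneda.obj (L.obj B)) where
  app C := TypeCat.ofHom (fun f => L.map f)
  naturality C C' g := by
    ext f
    exact L.map_comp g.unop f

@[simp] lemma eta_app (L : 𝔹 ⥤ 𝔸) (B : 𝔹) (C : 𝔹ᵒᵖ) (f : C.unop ⟶ B) :
    (eta L B).app C f = L.map f := rfl

/-- The comparison map `L_!(y B) ⟶ y (L B)` is an isomorphism. -/
lemma isIso_phi (L : 𝔹 ⥤ 𝔸)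
    (Lshriek : (𝔹ᵒᵖ ⥤ Type u) ⥤ (𝔸ᵒᵖ ⥤ Type u))
    (adjPsh : Lshriek ⊣ (Functor.whiskeringLeft 𝔹ᵒᵖ 𝔸ᵒᵖ (Type u)).obj L.op) (B : 𝔹) :
    IsIso ((adjPsh.homEquiv (yoneda.obj B) (yoneda.obj (L.obj B))).symm (eta L B)) := by
  apply isIso_of_coyoneda_map_bijective
  intro X
  have key : (fun (g : yoneda.obj (L.obj B) ⟶ X) =>
      (adjPsh.homEquiv (yoneda.obj B) (yoneda.obj (L.obj B))).symm (eta L B) ≫ g) =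
      fun g => (adjPsh.homEquiv _ _).symm (eta L B ≫
        (((Functor.whiskeringLeft 𝔹ᵒᵖ 𝔸ᵒᵖ (Type u)).obj L.op).map g)) := by
    funext g
    rw [Adjunction.homEquiv_naturality_right_symm]
  rw [key]
  have key2 : (fun (g : yoneda.obj (L.obj B) ⟶ X) =>
      eta L B ≫ (((Functor.whiskeringLeft 𝔹ᵒᵖ 𝔸ᵒᵖ (Type u)).obj L.op).map g)) =
      fun g => (yonedaEquiv (X := B)
        (F := ((Functor.whiskeringLeft 𝔹ᵒᵖ 𝔸ᵒᵖ (Type u)).obj L.op).obj X)).symm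
        (yonedaEquiv (X := L.obj B) (F := X) g) := by
    funext g
    apply yonedaEquiv.injective
    rw [Equiv.apply_symm_apply, yonedaEquiv_comp]
    show (((Functor.whiskeringLeft 𝔹ᵒᵖ 𝔸ᵒᵖ (Type u)).obj L.op).map g).app (op B)
        (yonedaEquiv (eta L B)) = yonedaEquiv g
    have : (yonedaEquiv (eta L B)) = L.map (𝟙 B) := rfl
    rw [this, L.map_id]
    rfl
  have : Function.Bijective (fun (g : yoneda.obj (L.obj B) ⟶ X) =>
      eta L B ≫ (((Functor.whiskeringLeft 𝔹ᵒᵖ 𝔸ᵒᵖ (Type u)).obj L.op).map g)) := by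
    rw [key2]
    exact ((yonedaEquiv (X := L.obj B) (F := X)).trans
      (yonedaEquiv (F := ((Functor.whiskeringLeft 𝔹ᵒᵖ 𝔸ᵒᵖ (Type u)).obj L.op).obj X)).symm).bijective
  exact Function.Bijective.comp (adjPsh.homEquiv _ _).symm.bijective this

end Stmt5Aux

/-- For a reflection `L ⊣ F : 𝔸 → 𝔹` between small finitely complete categories, if the
adjunction `L_! ⊣ L*` between the presheaf categories is stably Frobenius, then the
reflection `L ⊣ F` is semi-left-exact: `L` preserves pullbacks along morphisms in the
image of `F`. -/
theorem stmt5 {𝔸 𝔹 : Type u} [SmallCategory 𝔸] [SmallCategory 𝔹]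
    [HasFiniteLimits 𝔸] [HasFiniteLimits 𝔹]
    (L : 𝔹 ⥤ 𝔸) (F : 𝔸 ⥤ 𝔹) (adj : L ⊣ F) [F.Full] [F.Faithful]
    (Lshriek : (𝔹ᵒᵖ ⥤ Type u) ⥤ (𝔸ᵒᵖ ⥤ Type u))
    (adjPsh : Lshriek ⊣ (Functor.whiskeringLeft 𝔹ᵒᵖ 𝔸ᵒᵖ (Type u)).obj L.op)
    (h : StablyFrobenius adjPsh) :
    ∀ {P B : 𝔹} {I J : 𝔸} (p₁ : P ⟶ B) (p₂ : P ⟶ F.obj J)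
      (b : B ⟶ F.obj I) (u : J ⟶ I),
      IsPullback p₁ p₂ b (F.map u) →
      IsPullback (L.map p₁) (L.map p₂) (L.map b) (L.map (F.map u)) := by
  intro P B I J p₁ p₂ b u hpb
  open Stmt5Aux Opposite in
  · -- Step 1: the yoneda image of the square, corrected by θ, is a pullback over Φ(y u)
    have hθ : yoneda.map (F.map u) ≫ (theta L F adj I).hom =
        (theta L F adj J).hom ≫ ((Functor.whiskeringLeft 𝔹ᵒᵖ 𝔸ᵒᵖ (Type u)).obj L.op).map (yoneda.map u) := by
      ext C f
      show (adj.homEquiv C.unop I).symm (f ≫ F.map u) = (adj.homEquiv C.unop J).symm f ≫ u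
      rw [Adjunction.homEquiv_naturality_right_symm]
    have s1 : IsPullback (yoneda.map p₁) (yoneda.map p₂) (yoneda.map b)
        (yoneda.map (F.map u)) := hpb.map yoneda
    have t1 : IsPullback (yoneda.map (F.map u)) (theta L F adj J).hom
        (theta L F adj I).hom (((Functor.whiskeringLeft 𝔹ᵒᵖ 𝔸ᵒᵖ (Type u)).obj L.op).map (yoneda.map u)) :=
      IsPullback.of_vert_isIso ⟨hθ⟩
    have S' := s1.paste_vert t1
    -- Step 2: apply the stably-Frobenius hypothesis
    have T' := h (yoneda.map p₁) (yoneda.map p₂ ≫ (theta L F adj J).hom)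
      (yoneda.map b ≫ (theta L F adj I).hom) (yoneda.map u) S'
    -- Step 3: transport along the comparison isos `L_!(y X) ≅ y (L X)`
    let φ : ∀ (X : 𝔹), Lshriek.obj (yoneda.obj X) ⟶ yoneda.obj (L.obj X) :=
      fun X => (adjPsh.homEquiv (yoneda.obj X) (yoneda.obj (L.obj X))).symm (eta L X)
    have hiso : ∀ X : 𝔹, IsIso (φ X) := fun X => isIso_phi L Lshriek adjPsh X
    have compat : ∀ {X : 𝔹} {K : 𝔸} (q : X ⟶ F.obj K),
        (adjPsh.homEquiv (yoneda.obj X) (yoneda.obj K)).symm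
            (yoneda.map q ≫ (theta L F adj K).hom) =
          φ X ≫ yoneda.map ((adj.homEquiv X K).symm q) := by
      intro X K q
      apply (adjPsh.homEquiv _ _).injective
      rw [Equiv.apply_symm_apply, Adjunction.homEquiv_naturality_right,
        Equiv.apply_symm_apply]
      ext C f
      show (adj.homEquiv C.unop K).symm (f ≫ q) = L.map f ≫ (adj.homEquiv X K).symm q
      rw [Adjunction.homEquiv_naturality_left_symm]
    have compat₁ : Lshriek.map (yoneda.map p₁) ≫ φ B = φ P ≫ yoneda.map (L.map p₁) := by
      apply (adjPsh.homEquiv _ _).injective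
      rw [Adjunction.homEquiv_naturality_left, Equiv.apply_symm_apply,
        Adjunction.homEquiv_naturality_right, Equiv.apply_symm_apply]
      ext C f
      exact L.map_comp f p₁
    have T : IsPullback (yoneda.map (L.map p₁))
        (yoneda.map ((adj.homEquiv P J).symm p₂))
        (yoneda.map ((adj.homEquiv B I).symm b)) (yoneda.map u) := by
      have := hiso P
      have := hiso B
      exact T'.of_iso (asIso (φ P)) (asIso (φ B)) (Iso.refl _) (Iso.refl _)
        compat₁ (by simpa using compat p₂) (by simpa using compat b)
        (by simp)
    -- Step 4: reflect through yoneda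
    have TA : IsPullback (L.map p₁) ((adj.homEquiv P J).symm p₂)
        ((adj.homEquiv B I).symm b) u :=
      IsPullback.of_map_of_faithful yoneda T
    -- Step 5: strip the counit isomorphisms
    rw [Adjunction.homEquiv_counit, Adjunction.homEquiv_counit] at TA
    have t2 : IsPullback (L.map (F.map u)) (adj.counit.app J) (adj.counit.app I) u :=
      IsPullback.of_vert_isIso ⟨adj.counit.naturality u⟩
    exact IsPullback.of_bot TA
      (by rw [← L.map_comp, ← L.map_comp, hpb.w]) t2
end

section
/- The category of finite preorders and monotone maps is not locally cartesian closed: although it has finite limits, there exists a finite preorder X such that the slice category of finite preorders over X is not cartesian closed. -/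
open CategoryTheory Limits

/-- The category of finite preorders and monotone maps, as the full subcategory of
the category `Preord` of preorders consisting of those with finite underlying set. -/
abbrev FinPreord : Type 1 :=
  ObjectProperty.FullSubcategory (fun X : Preord.{0} => Finite X)

namespace NotLCCC

/-- view a `Preord` morphism as an order hom -/
def ap {A B : FinPreord} (f : A ⟶ B) : A.obj →o B.obj := f.hom.hom

def mkH {A B : FinPreord} (f : A.obj →o B.obj) : A ⟶ B := ⟨Preord.ofHom f⟩

theorem hom_ext' {A B : FinPreord} {f g : A ⟶ B} (h : ∀ x, ap f x = ap g x) : f = g :=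
  ObjectProperty.hom_ext _ (Preord.hom_ext (OrderHom.ext _ _ (funext h)))

/-- the terminal object -/
def Tobj : FinPreord := ⟨Preord.of PUnit, inferInstanceAs (Finite PUnit.{1})⟩

instance (Y : FinPreord) : Nonempty (Y ⟶ Tobj) :=
  ⟨mkH (show Y.obj →o (Preord.of PUnit) from ⟨fun _ => PUnit.unit, fun _ _ _ => le_refl _⟩)⟩

instance (Y : FinPreord) : Subsingleton (Y ⟶ Tobj) :=
  ⟨fun f g => hom_ext' fun _ => @Subsingleton.elim PUnit.{1} _ _ _⟩

instance : HasTerminal FinPreord := hasTerminal_of_unique Tobj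

section Pullbacks

variable {A B C : FinPreord} (f : A ⟶ C) (g : B ⟶ C)

def Pt : FinPreord :=
  ⟨Preord.of {p : A.obj × B.obj // ap f p.1 = ap g p.2},
    by have := A.property; have := B.property; exact Subtype.finite⟩

def p1 : Pt f g ⟶ A := mkH (show _ →o _ from ⟨fun p => p.1.1, fun _ _ h => h.1⟩)
def p2 : Pt f g ⟶ B := mkH (show _ →o _ from ⟨fun p => p.1.2, fun _ _ h => h.2⟩)

theorem pcomm : p1 f g ≫ f = p2 f g ≫ g := hom_ext' fun p => p.2

def pbIsLimit : IsLimit (PullbackCone.mk _ _ (pcomm f g)) := by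
  apply PullbackCone.IsLimit.mk (pcomm f g)
    (fun s => mkH (show s.pt.obj →o (Pt f g).obj from
      ⟨fun z => ⟨(ap s.fst z, ap s.snd z), congrArg (fun h => ap h z) s.condition⟩,
       fun a b hab => ⟨(ap s.fst).monotone hab, (ap s.snd).monotone hab⟩⟩))
  · intro s; exact hom_ext' fun z => rfl
  · intro s; exact hom_ext' fun z => rfl
  · intro s m h1 h2
    apply hom_ext'
    intro z
    apply Subtype.ext
    exact Prod.ext (congrArg (fun h => ap h z) h1) (congrArg (fun h => ap h z) h2)

instance : HasPullbacks FinPreord := by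
  have : ∀ {A B C : FinPreord} {f : A ⟶ C} {g : B ⟶ C}, HasLimit (cospan f g) :=
    fun {A B C f g} => HasLimit.mk ⟨_, pbIsLimit f g⟩
  exact hasPullbacks_of_hasLimit_cospan _

instance finlim : HasFiniteLimits FinPreord := hasFiniteLimits_of_hasTerminal_and_pullbacks

end Pullbacks

end NotLCCC
namespace NotLCCC

/-- the four-element preorder: two disjoint 2-chains x0<x1 and y1<y2 -/
inductive BT : Type
  | x0 | x1 | y1 | y2
  deriving DecidableEq

open BT

def BT.leB : BT → BT → Bool
  | x0, x0 => true | x0, x1 => true | x1, x1 => true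
  | y1, y1 => true | y1, y2 => true | y2, y2 => true
  | _, _ => false

instance : Fintype BT :=
  ⟨⟨{x0, x1, y1, y2}, by decide⟩, by intro a; cases a <;> decide⟩

instance : Preorder BT where
  le a b := BT.leB a b = true
  le_refl a := by cases a <;> rfl
  le_trans a b c h1 h2 := by
    cases a <;> cases b <;> cases c <;> simp_all [BT.leB]

instance : ∀ a b : BT, Decidable (a ≤ b) := fun a b =>
  inferInstanceAs (Decidable (BT.leB a b = true))

/-- the base: the 3-chain -/
def Xf : ObjectProperty.FullSubcategory (fun X : Preord.{0} => Finite X) :=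
  ⟨Preord.of (Fin 3), inferInstanceAs (Finite (Fin 3))⟩

abbrev AT : Type := {i : Fin 3 // i ≠ 1}

def Af : ObjectProperty.FullSubcategory (fun X : Preord.{0} => Finite X) :=
  ⟨Preord.of AT, inferInstanceAs (Finite AT)⟩

def Bf : ObjectProperty.FullSubcategory (fun X : Preord.{0} => Finite X) :=
  ⟨Preord.of BT, inferInstanceAs (Finite BT)⟩

def Wf : ObjectProperty.FullSubcategory (fun X : Preord.{0} => Finite X) :=
  ⟨Preord.of PUnit.{1}, inferInstanceAs (Finite PUnit.{1})⟩

/-- the inclusion of `{0 < 2}` into the 3-chain -/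
def iA : Af ⟶ Xf := mkH (show AT →o Fin 3 from ⟨Subtype.val, fun _ _ h => h⟩)

def bBfun : BT → Fin 3
  | x0 => 0 | x1 => 1 | y1 => 1 | y2 => 2

/-- the surjection from `B` onto the 3-chain -/
def bB : Bf ⟶ Xf := mkH (show BT →o Fin 3 from ⟨bBfun, by intro a b h; cases a <;> cases b <;> first | rfl | exact absurd h (by decide) | decide⟩)

def wX : Wf ⟶ Xf := mkH (show PUnit.{1} →o Fin 3 from ⟨fun _ => 1, fun _ _ _ => le_refl _⟩)

end NotLCCC

namespace NotLCCC
open MonoidalCategory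

noncomputable section

def Xo : Over Xf := Over.mk (𝟙 Xf)
def Ao : Over Xf := Over.mk iA
def Bo : Over Xf := Over.mk bB
def Wo : Over Xf := Over.mk wX

def lmap : Wo ⟶ Bo :=
  Over.homMk (mkH (show PUnit.{1} →o BT from ⟨fun _ => BT.x1, fun _ _ _ => le_refl _⟩))
    (hom_ext' fun _ => rfl)

def rmap : Wo ⟶ Bo :=
  Over.homMk (mkH (show PUnit.{1} →o BT from ⟨fun _ => BT.y1, fun _ _ _ => le_refl _⟩))
    (hom_ext' fun _ => rfl)

def q : Bo ⟶ Xo := Over.homMk bB (hom_ext' fun _ => rfl)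

theorem qw : lmap ≫ q = rmap ≫ q :=
  Over.OverMorphism.ext (hom_ext' fun _ => rfl)

/-- the coequalized elements are identified by any cofork -/
theorem key (s : Cofork lmap rmap) : ap s.π.left BT.x1 = ap s.π.left BT.y1 :=
  congrArg (fun (h : Wo ⟶ s.pt) => ap h.left PUnit.unit) s.condition

def binv : Fin 3 → BT
  | 0 => BT.x0
  | 1 => BT.x1
  | _ => BT.y2

theorem bfiberk : ∀ k : Fin 3, bBfun (binv k) = k := by decide

def descFun (s : Cofork lmap rmap) : Fin 3 → (s.pt.left).obj :=
  fun k => ap s.π.left (binv k)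

theorem descMono (s : Cofork lmap rmap) : Monotone (descFun s) := by
  have h01 : descFun s 0 ≤ descFun s 1 :=
    (ap s.π.left).monotone (show BT.x0 ≤ BT.x1 by decide)
  have h12 : descFun s 1 ≤ descFun s 2 := by
    show ap s.π.left BT.x1 ≤ ap s.π.left BT.y2
    rw [key s]
    exact (ap s.π.left).monotone (show BT.y1 ≤ BT.y2 by decide)
  intro a b hab
  fin_cases a <;> fin_cases b <;>
    first
      | exact le_refl _
      | exact h01
      | exact h12
      | exact h01.trans h12
      | exact absurd hab (by decide)

def desc (s : Cofork lmap rmap) : Xo ⟶ s.pt :=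
  Over.homMk (mkH (show (Fin 3 : Type) →o (s.pt.left).obj from ⟨descFun s, descMono s⟩))
    (hom_ext' fun k => by
      have h := congrArg (fun h => ap h (binv k)) (Over.w s.π)
      exact h.trans (bfiberk k))

theorem fac (s : Cofork lmap rmap) : q ≫ desc s = s.π := by
  apply Over.OverMorphism.ext
  apply hom_ext'
  intro b
  cases b
  exacts [rfl, rfl, key s, rfl]

def coforkColim : IsColimit (Cofork.ofπ q qw) := by
  refine Cofork.IsColimit.mk _ desc fac ?_
  intro s m hm
  apply Over.OverMorphism.ext
  apply hom_ext'
  intro k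
  have h := congrArg (fun (h : Bo ⟶ s.pt) => ap h.left (binv k)) hm
  exact (congrArg (ap m.left) (bfiberk k).symm).trans h

instance : IsRegularEpi q :=
  ⟨⟨{ W := Wo, left := lmap, right := rmap, w := qw, isColimit := coforkColim }⟩⟩

theorem bfiber : ∀ b b' : BT, bBfun b = bBfun b' → bBfun b ≠ 1 → b = b' := by decide

theorem no_hom (m : Ao ⟶ Bo) : False := by
  have hw := Over.w m
  have h0val := congrArg (fun h => ap h (show AT from ⟨0, by decide⟩)) hw
  have h2val := congrArg (fun h => ap h (show AT from ⟨2, by decide⟩)) hw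
  have h0 : ap m.left (show AT from ⟨0, by decide⟩) = BT.x0 :=
    bfiber _ BT.x0 h0val (fun hc => (show ¬((0 : Fin 3) = 1) by decide) (h0val.symm.trans hc))
  have h2 : ap m.left (show AT from ⟨2, by decide⟩) = BT.y2 :=
    bfiber _ BT.y2 h2val (fun hc => (show ¬((2 : Fin 3) = 1) by decide) (h2val.symm.trans hc))
  have hle : (show AT from ⟨0, by decide⟩) ≤ (show AT from ⟨2, by decide⟩) :=
    show (0 : Fin 3) ≤ 2 by decide
  have hmono := (ap m.left).monotone hle
  rw [h0, h2] at hmono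
  exact (show ¬(BT.x0 ≤ BT.y2) by decide) hmono

theorem mono_whisker [CartesianMonoidalCategory (Over Xf)] : Mono (Ao ◁ q) := by
  constructor
  intro Z g1 g2 hg
  apply CartesianMonoidalCategory.hom_ext
  · have h1 := congrArg (fun h => h ≫ CartesianMonoidalCategory.fst Ao Xo) hg
    simpa only [Category.assoc, CartesianMonoidalCategory.whiskerLeft_fst] using h1
  · set u := g1 ≫ CartesianMonoidalCategory.fst Ao Bo with hu
    apply Over.OverMorphism.ext
    apply hom_ext'
    intro z
    have h := congrArg (fun h => ap h z) (Over.w u)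
    have hZ : ap Z.hom z ≠ (1 : Fin 3) := fun hc => (ap u.left z).property (h.trans hc)
    have w1 := congrArg (fun h => ap h z) (Over.w (g1 ≫ CartesianMonoidalCategory.snd Ao Bo))
    have w2 := congrArg (fun h => ap h z) (Over.w (g2 ≫ CartesianMonoidalCategory.snd Ao Bo))
    exact bfiber _ _ (w1.trans w2.symm) (fun hc => hZ (w1.symm.trans hc))

end

end NotLCCC

namespace NotLCCC
open MonoidalCategory in
theorem final :
    ∃ h : HasFiniteLimits FinPreord,
      haveI := h
      ∃ X : FinPreord,
        letI : CartesianMonoidalCategory (Over X) := CartesianMonoidalCategory.ofHasFiniteProducts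
        IsEmpty (MonoidalClosed (Over X)) := by
  refine ⟨finlim, Xf, ?_⟩
  letI : CartesianMonoidalCategory (Over Xf) := CartesianMonoidalCategory.ofHasFiniteProducts
  constructor
  intro cc
  haveI := cc
  haveI : PreservesColimitsOfSize.{0, 0} (tensorLeft Ao) :=
    (ihom.adjunction Ao).leftAdjoint_preservesColimits
  haveI : IsRegularEpi ((tensorLeft Ao).map q) := ⟨⟨
    { W := (tensorLeft Ao).obj Wo
      left := (tensorLeft Ao).map lmap
      right := (tensorLeft Ao).map rmap
      w := by rw [← Functor.map_comp, ← Functor.map_comp, qw]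
      isColimit := isColimitCoforkMapOfIsColimit (tensorLeft Ao) qw coforkColim }⟩⟩
  haveI : Mono ((tensorLeft Ao).map q) := mono_whisker
  haveI : IsIso ((tensorLeft Ao).map q) := isIso_of_mono_of_strongEpi _
  refine no_hom ?_
  exact CartesianMonoidalCategory.lift (𝟙 Ao) ((Over.homMk iA (hom_ext' fun _ => rfl) : Ao ⟶ Xo)) ≫
    inv ((tensorLeft Ao).map q) ≫ CartesianMonoidalCategory.snd Ao Bo

end NotLCCC

/-- The category of finite preorders is not locally cartesian closed: although it has
all finite limits, there is a finite preorder `X` such that the slice category over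
`X` is not cartesian closed. -/
theorem stmt9 :
    ∃ h : HasFiniteLimits FinPreord,
      haveI := h
      ∃ X : FinPreord,
        letI : CartesianMonoidalCategory (Over X) := CartesianMonoidalCategory.ofHasFiniteProducts
        IsEmpty (MonoidalClosed (Over X)) :=
  NotLCCC.final
end

section
/- The category of finite preorders, regarded as a full subcategory of the category of finite reflexive graphs (via the functor sending a preorder to its underlying reflexive graph, with an edge x → y whenever x ≤ y), is a reflective subcategory and an exponential ideal: the inclusion has a left adjoint, and for every finite reflexive graph X and finite preorder P, the exponential of the underlying graph of P by X in finite reflexive graphs is (isomorphic to the underlying graph of) a preorder. Equivalently, the reflector from finite reflexive graphs to finite preorders preserves finite products. -/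
open CategoryTheory Limits

/-- A finite reflexive graph: a finite set of vertices, a finite set of directed
edges with source and target maps, and a distinguished loop on each vertex. -/
structure FinReflGraph : Type 1 where
  V : Type
  E : Type
  finV : Finite V
  finE : Finite E
  src : E → V
  tgt : E → V
  loop : V → E
  src_loop : ∀ v, src (loop v) = v
  tgt_loop : ∀ v, tgt (loop v) = v

namespace FinReflGraph

/-- Morphisms of reflexive graphs: maps of vertices and of edges preserving sources,
targets and distinguished loops. -/
@[ext]
structure Hom (G H : FinReflGraph) where
  vMap : G.V → H.V
  eMap : G.E → H.E
  src_comm : ∀ e, H.src (eMap e) = vMap (G.src e)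
  tgt_comm : ∀ e, H.tgt (eMap e) = vMap (G.tgt e)
  loop_comm : ∀ v, eMap (G.loop v) = H.loop (vMap v)

instance : Category FinReflGraph where
  Hom := Hom
  id G := ⟨id, id, fun _ => rfl, fun _ => rfl, fun _ => rfl⟩
  comp f g := ⟨g.vMap ∘ f.vMap, g.eMap ∘ f.eMap,
    fun e => by simp [f.src_comm, g.src_comm],
    fun e => by simp [f.tgt_comm, g.tgt_comm],
    fun v => by simp [f.loop_comm, g.loop_comm]⟩

end FinReflGraph

/-- The functor sending a finite preorder to its underlying reflexive graph, with an
edge `x ⟶ y` exactly when `x ≤ y`. -/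
def toGraph : FinPreord ⥤ FinReflGraph where
  obj P :=
    { V := P.obj
      E := {p : P.obj × P.obj // p.1 ≤ p.2}
      finV := P.property
      finE := by have : Finite P.obj := P.property; exact Subtype.finite
      src := fun e => e.1.1
      tgt := fun e => e.1.2
      loop := fun v => ⟨(v, v), le_refl v⟩
      src_loop := fun _ => rfl
      tgt_loop := fun _ => rfl }
  map {P Q} f :=
    let g : OrderHom P.obj Q.obj := f.hom.hom
    { vMap := g
      eMap := fun e => ⟨(g e.1.1, g e.1.2), g.monotone e.2⟩
      src_comm := fun _ => rfl
      tgt_comm := fun _ => rfl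
      loop_comm := fun _ => rfl }


namespace FinReflGraph

@[simp] lemma id_vMap (G : FinReflGraph) : (𝟙 G : G ⟶ G).vMap = id := rfl
@[simp] lemma id_eMap (G : FinReflGraph) : (𝟙 G : G ⟶ G).eMap = id := rfl
@[simp] lemma comp_vMap {G H K : FinReflGraph} (f : G ⟶ H) (g : H ⟶ K) :
    (f ≫ g).vMap = g.vMap ∘ f.vMap := rfl
@[simp] lemma comp_eMap {G H K : FinReflGraph} (f : G ⟶ H) (g : H ⟶ K) :
    (f ≫ g).eMap = g.eMap ∘ f.eMap := rfl

end FinReflGraph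

/-- The one-step edge relation of a graph. -/
def FinReflGraph.step (G : FinReflGraph) (a b : G.V) : Prop :=
  ∃ e, G.src e = a ∧ G.tgt e = b

/-- The preorder generated by the edge relation. -/
def FinReflGraph.pre (G : FinReflGraph) : Preorder G.V where
  le := Relation.ReflTransGen G.step
  le_refl _ := Relation.ReflTransGen.refl
  le_trans _ _ _ := Relation.ReflTransGen.trans

/-- The reflector: free preorder on a reflexive graph. -/
def reflect : FinReflGraph ⥤ FinPreord where
  obj G := ⟨@Preord.of G.V G.pre, G.finV⟩
  map {G H} f := by
    letI : Preorder G.V := G.pre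
    letI : Preorder H.V := H.pre
    exact ⟨Preord.ofHom (show @OrderHom G.V H.V G.pre H.pre from
    { toFun := f.vMap
      monotone' := fun a b h => Relation.ReflTransGen.lift f.vMap
        (p := H.step) (fun a b (⟨e, hs, ht⟩ : G.step a b) => (⟨f.eMap e, by rw [f.src_comm, hs], by rw [f.tgt_comm, ht]⟩ : H.step (f.vMap a) (f.vMap b))) a b h })⟩
  map_id G := rfl
  map_comp f g := rfl

/-- Forward direction of the adjunction's hom equivalence. -/
def adjFwd (G : FinReflGraph) (P : FinPreord) (f : reflect.obj G ⟶ P) :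
    G ⟶ toGraph.obj P where
  vMap := f.hom.hom.toFun
  eMap e := ⟨(f.hom.hom.toFun (G.src e), f.hom.hom.toFun (G.tgt e)), by
    letI : Preorder G.V := G.pre
    exact f.hom.hom.monotone' (Relation.ReflTransGen.single ⟨e, rfl, rfl⟩)⟩
  src_comm _ := rfl
  tgt_comm _ := rfl
  loop_comm v := by
    apply Subtype.ext
    simp only [G.src_loop, G.tgt_loop]
    rfl

/-- Backward direction of the adjunction's hom equivalence. -/
def adjBwd (G : FinReflGraph) (P : FinPreord) (h : G ⟶ toGraph.obj P) :
    reflect.obj G ⟶ P := by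
  letI : Preorder G.V := G.pre
  exact ⟨Preord.ofHom (show @OrderHom G.V P.obj G.pre _ from
  { toFun := h.vMap
    monotone' := by
      intro a b hab
      have hab' : Relation.ReflTransGen G.step a b := hab
      clear hab
      induction hab' with
      | refl => exact le_refl _
      | tail _ hbc ih =>
        refine le_trans ih ?_
        obtain ⟨e, hs, ht⟩ := hbc
        have h1 := (h.eMap e).2
        have h2 := h.src_comm e
        have h3 := h.tgt_comm e
        simp only [toGraph] at h2 h3
        rw [hs] at h2; rw [ht] at h3
        rw [← h2, ← h3]
        exact h1 })⟩

/-- The adjunction `reflect ⊣ toGraph`. -/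
def reflectAdj : reflect ⊣ toGraph :=
  CategoryTheory.Adjunction.mkOfHomEquiv
    { homEquiv := fun G P =>
        { toFun := adjFwd G P
          invFun := adjBwd G P
          left_inv := fun f => rfl
          right_inv := fun h => by
            apply FinReflGraph.Hom.ext
            · rfl
            · funext e
              apply Subtype.ext
              apply Prod.ext
              · exact (h.src_comm e).symm
              · exact (h.tgt_comm e).symm }
      homEquiv_naturality_left_symm := by
        intro G G' P f g
        rfl
      homEquiv_naturality_right := by
        intro G P P' f g
        apply FinReflGraph.Hom.ext
        · rfl
        · funext e
          apply Subtype.ext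
          rfl }

theorem toGraph_full : toGraph.Full := by
  constructor
  intro P Q h
  refine ⟨⟨Preord.ofHom (show @OrderHom P.obj Q.obj _ _ from ⟨h.vMap, ?_⟩)⟩, ?_⟩
  · intro a b hab
    have h1 := (h.eMap ⟨(a, b), hab⟩).2
    have h2 := h.src_comm ⟨(a, b), hab⟩
    have h3 := h.tgt_comm ⟨(a, b), hab⟩
    simp only [toGraph] at h1 h2 h3
    rw [← h2, ← h3]; exact h1
  · apply FinReflGraph.Hom.ext
    · rfl
    · funext e
      apply Subtype.ext
      apply Prod.ext
      · exact (h.src_comm e).symm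
      · exact (h.tgt_comm e).symm

theorem toGraph_faithful : toGraph.Faithful := by
  constructor
  intro P Q f g hfg
  have : (toGraph.map f).vMap = (toGraph.map g).vMap := by rw [hfg]
  exact ObjectProperty.hom_ext (h := Preord.hom_ext (OrderHom.ext _ _ this))


namespace FinReflGraph

/-- The terminal reflexive graph. -/
def terminalGraph : FinReflGraph where
  V := Unit
  E := Unit
  finV := inferInstance
  finE := inferInstance
  src _ := ()
  tgt _ := ()
  loop _ := ()
  src_loop _ := rfl
  tgt_loop _ := rfl

def terminalIsTerminal : IsTerminal terminalGraph :=
  IsTerminal.ofUniqueHom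
    (fun G => ⟨fun _ => (), fun _ => (), fun _ => rfl, fun _ => rfl, fun _ => rfl⟩)
    (fun G m => by apply Hom.ext <;> funext x <;> rfl)

/-- Binary product of reflexive graphs. -/
def prodGraph (G H : FinReflGraph) : FinReflGraph where
  V := G.V × H.V
  E := G.E × H.E
  finV := by have := G.finV; have := H.finV; infer_instance
  finE := by have := G.finE; have := H.finE; infer_instance
  src e := (G.src e.1, H.src e.2)
  tgt e := (G.tgt e.1, H.tgt e.2)
  loop v := (G.loop v.1, H.loop v.2)
  src_loop v := by simp [G.src_loop, H.src_loop]
  tgt_loop v := by simp [G.tgt_loop, H.tgt_loop]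

def prodFst (G H : FinReflGraph) : prodGraph G H ⟶ G :=
  ⟨Prod.fst, Prod.fst, fun _ => rfl, fun _ => rfl, fun _ => rfl⟩

def prodSnd (G H : FinReflGraph) : prodGraph G H ⟶ H :=
  ⟨Prod.snd, Prod.snd, fun _ => rfl, fun _ => rfl, fun _ => rfl⟩

def prodLift {K G H : FinReflGraph} (f : K ⟶ G) (g : K ⟶ H) : K ⟶ prodGraph G H where
  vMap v := (f.vMap v, g.vMap v)
  eMap e := (f.eMap e, g.eMap e)
  src_comm e := by simp [prodGraph, f.src_comm, g.src_comm]
  tgt_comm e := by simp [prodGraph, f.tgt_comm, g.tgt_comm]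
  loop_comm v := by simp [prodGraph, f.loop_comm, g.loop_comm]

def prodIsLimit (G H : FinReflGraph) :
    IsLimit (BinaryFan.mk (prodFst G H) (prodSnd G H)) :=
  BinaryFan.isLimitMk (fun s => prodLift s.fst s.snd)
    (fun s => by apply Hom.ext <;> rfl)
    (fun s => by apply Hom.ext <;> rfl)
    (fun s m h1 h2 => by
      apply Hom.ext
      · funext v
        have a1 := congrArg Hom.vMap h1
        have a2 := congrArg Hom.vMap h2
        exact Prod.ext (congrFun a1 v) (congrFun a2 v)
      · funext e
        have a1 := congrArg Hom.eMap h1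
        have a2 := congrArg Hom.eMap h2
        exact Prod.ext (congrFun a1 e) (congrFun a2 e))

end FinReflGraph

open FinReflGraph in
/-- Chosen finite products on finite reflexive graphs. -/
def cfpGraph : CartesianMonoidalCategory FinReflGraph :=
  CartesianMonoidalCategory.ofChosenFiniteProducts ⟨_, terminalIsTerminal⟩
    (fun G H => ⟨_, prodIsLimit G H⟩)

namespace FinReflGraph

instance : Finite (Unit : Type) := inferInstance

instance homFinite (G H : FinReflGraph) : Finite (G ⟶ H) := by
  have := G.finV; have := G.finE; have := H.finV; have := H.finE
  exact Finite.of_injective (fun f : Hom G H => (f.vMap, f.eMap))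
    (fun f g h => by
      apply Hom.ext
      · exact congrArg Prod.fst h
      · exact congrArg Prod.snd h)

/-- The exponential graph `Z ^ X`. -/
def expGraph (X Z : FinReflGraph) : FinReflGraph where
  V := X ⟶ Z
  E := {t : (X ⟶ Z) × (X ⟶ Z) × (X.E → Z.E) //
    (∀ e, Z.src (t.2.2 e) = t.1.vMap (X.src e)) ∧
    (∀ e, Z.tgt (t.2.2 e) = t.2.1.vMap (X.tgt e))}
  finV := homFinite X Z
  finE := by
    have := X.finE; have := Z.finE
    have : Finite ((X ⟶ Z) × (X ⟶ Z) × (X.E → Z.E)) := by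
      have := homFinite X Z; infer_instance
    exact Subtype.finite
  src t := t.1.1
  tgt t := t.1.2.1
  loop f := ⟨(f, f, f.eMap), f.src_comm, f.tgt_comm⟩
  src_loop _ := rfl
  tgt_loop _ := rfl

end FinReflGraph


namespace FinReflGraph

/-- Currying on vertices. -/
def curryV {X Y Z : FinReflGraph} (h : prodGraph X Y ⟶ Z) (y : Y.V) : X ⟶ Z where
  vMap x := h.vMap (x, y)
  eMap e := h.eMap (e, Y.loop y)
  src_comm e := by
    have := h.src_comm (e, Y.loop y)
    simpa [prodGraph, Y.src_loop] using this
  tgt_comm e := by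
    have := h.tgt_comm (e, Y.loop y)
    simpa [prodGraph, Y.tgt_loop] using this
  loop_comm v := h.loop_comm (v, y)

/-- Currying. -/
def curryG {X Y Z : FinReflGraph} (h : prodGraph X Y ⟶ Z) : Y ⟶ expGraph X Z where
  vMap y := curryV h y
  eMap ε := ⟨(curryV h (Y.src ε), curryV h (Y.tgt ε), fun e => h.eMap (e, ε)),
    fun e => h.src_comm (e, ε), fun e => h.tgt_comm (e, ε)⟩
  src_comm _ := rfl
  tgt_comm _ := rfl
  loop_comm y := by
    apply Subtype.ext
    refine Prod.ext ?_ (Prod.ext ?_ ?_)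
    · exact congrArg (curryV h) (Y.src_loop y)
    · exact congrArg (curryV h) (Y.tgt_loop y)
    · rfl

/-- Uncurrying. -/
def uncurryG {X Y Z : FinReflGraph} (k : Y ⟶ expGraph X Z) : prodGraph X Y ⟶ Z where
  vMap p := (k.vMap p.2).vMap p.1
  eMap e := (k.eMap e.2).1.2.2 e.1
  src_comm e := by
    have hp := (k.eMap e.2).2.1 e.1
    have hs := k.src_comm e.2
    rw [hp]
    exact congrFun (congrArg Hom.vMap hs) (X.src e.1)
  tgt_comm e := by
    have hp := (k.eMap e.2).2.2 e.1
    have ht := k.tgt_comm e.2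
    rw [hp]
    exact congrFun (congrArg Hom.vMap ht) (X.tgt e.1)
  loop_comm p := by
    show (k.eMap (Y.loop p.2)).1.2.2 (X.loop p.1) = _
    rw [k.loop_comm p.2]
    exact (k.vMap p.2).loop_comm p.1

lemma curryV_uncurryG {X Y Z : FinReflGraph} (k : Y ⟶ expGraph X Z) (y : Y.V) :
    curryV (uncurryG k) y = k.vMap y := by
  apply Hom.ext
  · rfl
  · funext e
    show (k.eMap (Y.loop y)).1.2.2 e = _
    rw [k.loop_comm y]
    rfl

/-- The exponential functor `Z ↦ Z ^ X`. -/
def expFunctor (X : FinReflGraph) : FinReflGraph ⥤ FinReflGraph where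
  obj Z := expGraph X Z
  map {Z Z'} g :=
    { vMap := fun f => f ≫ g
      eMap := fun t => ⟨(t.1.1 ≫ g, t.1.2.1 ≫ g, fun e => g.eMap (t.1.2.2 e)),
        fun e => by rw [g.src_comm, t.2.1 e]; rfl,
        fun e => by rw [g.tgt_comm, t.2.2 e]; rfl⟩
      src_comm := fun _ => rfl
      tgt_comm := fun _ => rfl
      loop_comm := fun f => rfl }
  map_id Z := by
    apply Hom.ext
    · funext f; exact Category.comp_id f
    · funext t
      apply Subtype.ext
      refine Prod.ext ?_ (Prod.ext ?_ ?_)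
      · exact Category.comp_id _
      · exact Category.comp_id _
      · rfl
  map_comp f g := by
    apply Hom.ext
    · funext h; exact (Category.assoc h f g).symm
    · funext t
      apply Subtype.ext
      refine Prod.ext ?_ (Prod.ext ?_ ?_)
      · exact (Category.assoc _ f g).symm
      · exact (Category.assoc _ f g).symm
      · rfl

end FinReflGraph

section

attribute [local instance] cfpGraph

open FinReflGraph MonoidalCategory

/-- The exponential adjunction. -/
def expAdj (X : FinReflGraph) : tensorLeft X ⊣ expFunctor X :=
  Adjunction.mkOfHomEquiv
    { homEquiv := fun Y Z =>
        { toFun := fun h => curryG h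
          invFun := fun k => uncurryG k
          left_inv := fun h => by
            apply Hom.ext
            · rfl
            · rfl
          right_inv := fun k => by
            apply Hom.ext
            · funext y; exact curryV_uncurryG k y
            · funext ε
              apply Subtype.ext
              refine Prod.ext ?_ (Prod.ext ?_ ?_)
              · show curryV (uncurryG k) ((_ : FinReflGraph).src ε) = _
                refine (curryV_uncurryG k _).trans ?_
                exact (k.src_comm ε).symm
              · show curryV (uncurryG k) ((_ : FinReflGraph).tgt ε) = _
                refine (curryV_uncurryG k _).trans ?_
                exact (k.tgt_comm ε).symm
              · rfl }
      homEquiv_naturality_left_symm := by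
        intro Y Y' Z f g
        apply Hom.ext
        · rfl
        · rfl
      homEquiv_naturality_right := by
        intro Y Z Z' h g
        apply Hom.ext
        · rfl
        · rfl }

/-- Cartesian closedness of finite reflexive graphs. -/
def ccGraph : MonoidalClosed FinReflGraph :=
  ⟨fun X => ⟨expFunctor X, expAdj X⟩⟩

end


open FinReflGraph in
/-- The preorder on maps `A ⟶ toGraph.obj P`. -/
def expPre (A : FinReflGraph) (P : FinPreord) : Preorder (A ⟶ toGraph.obj P) where
  le f g := ∀ e : A.E,
    (show ↥P.obj from f.vMap (A.src e)) ≤ (show ↥P.obj from g.vMap (A.tgt e))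
  le_refl f e := by
    have h1 := (f.eMap e).2
    have h2 := f.src_comm e
    have h3 := f.tgt_comm e
    simp only [toGraph] at h1 h2 h3
    rw [← h2, ← h3]; exact h1
  le_trans f g h hfg hgh e := by
    refine le_trans (hfg e) ?_
    have := hgh (A.loop (A.tgt e))
    rwa [A.src_loop, A.tgt_loop] at this

open FinReflGraph in
/-- The preorder `expPre` as an object of `FinPreord`. -/
def expPreObj (A : FinReflGraph) (P : FinPreord) : FinPreord :=
  ⟨@Preord.of (A ⟶ toGraph.obj P) (expPre A P), homFinite A (toGraph.obj P)⟩

open FinReflGraph in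
/-- The exponential of a preorder graph is a preorder graph. -/
def expIso (A : FinReflGraph) (P : FinPreord) :
    toGraph.obj (expPreObj A P) ≅ expGraph A (toGraph.obj P) where
  hom :=
    { vMap := id
      eMap := fun t => ⟨(t.1.1, t.1.2, fun e => ⟨(t.1.1.vMap (A.src e), t.1.2.vMap (A.tgt e)),
          t.2 e⟩), fun _ => rfl, fun _ => rfl⟩
      src_comm := fun _ => rfl
      tgt_comm := fun _ => rfl
      loop_comm := fun f => by
        apply Subtype.ext
        refine Prod.ext rfl (Prod.ext rfl ?_)
        funext e
        apply Subtype.ext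
        exact Prod.ext (f.src_comm e).symm (f.tgt_comm e).symm }
  inv :=
    { vMap := id
      eMap := fun t => ⟨(t.1.1, t.1.2.1), fun e => by
        have h1 := (t.1.2.2 e).2
        have h2 := t.2.1 e
        have h3 := t.2.2 e
        simp only [toGraph] at h1 h2 h3
        rw [← h2, ← h3]; exact h1⟩
      src_comm := fun _ => rfl
      tgt_comm := fun _ => rfl
      loop_comm := fun f => Subtype.ext rfl }
  hom_inv_id := by
    apply FinReflGraph.Hom.ext
    · rfl
    · funext t
      apply Subtype.ext
      rfl
  inv_hom_id := by
    apply FinReflGraph.Hom.ext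
    · rfl
    · funext t
      apply Subtype.ext
      refine Prod.ext rfl (Prod.ext rfl ?_)
      funext e
      apply Subtype.ext
      exact Prod.ext (t.2.1 e).symm (t.2.2 e).symm

section

attribute [local instance] cfpGraph ccGraph

open FinReflGraph

theorem expIdealGraph : ExponentialIdeal toGraph := by
  apply ExponentialIdeal.mk'
  intro P A
  exact ⟨expPreObj A P, ⟨expIso A P⟩⟩

end

/-- The category of finite preorders, regarded (via `toGraph`) as a full subcategory
of the category of finite reflexive graphs, is a reflective subcategory and an
exponential ideal; equivalently, the reflector preserves finite products. -/
theorem stmt10 :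
    toGraph.Full ∧ toGraph.Faithful ∧ toGraph.IsRightAdjoint ∧
    (∃ cfp : CartesianMonoidalCategory FinReflGraph,
      letI := cfp
      ∃ cc : MonoidalClosed FinReflGraph,
        letI := cc
        ExponentialIdeal toGraph) ∧
    (∀ (R : FinReflGraph ⥤ FinPreord), (R ⊣ toGraph) → PreservesFiniteProducts R) := by
  refine ⟨toGraph_full, toGraph_faithful, ⟨reflect, ⟨reflectAdj⟩⟩,
    ⟨cfpGraph, ccGraph, expIdealGraph⟩, ?_⟩
  intro R hR
  letI := cfpGraph
  letI := ccGraph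
  haveI := toGraph_full
  haveI := toGraph_faithful
  letI : Reflective toGraph := { L := reflect, adj := reflectAdj }
  haveI := expIdealGraph
  letI : BraidedCategory FinReflGraph := BraidedCategory.ofCartesianMonoidalCategory
  letI : CartesianMonoidalCategory FinPreord := CartesianMonoidalCategory.ofReflective toGraph
  constructor
  intro J
  haveI : PreservesFiniteProducts (reflector toGraph) :=
    PreservesFiniteProducts.of_exponentialIdeal toGraph
  exact preservesLimitsOfShape_of_natIso
    (Adjunction.leftAdjointUniq (reflectorAdjunction toGraph) hR)
end
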